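/- The subgroup of SL(3,ℤ) consisting of all g satisfying gᵀ·B₁·g = B₁ and gᵀ·B₂·g = B₂, where B₁ = A(1,1,0) = [[2,0,1],[0,2,1],[1,1,2]] and B₂ = [[6,−2,2],[−2,6,2],[2,2,6]] (which is 3·A(2/3,2/3,−2/3)), is isomorphic to the dihedral group D₄ of order 8. -/

import Mathlib

open Matrix

/-- `SL(3, ℤ)`, the group of 3 × 3 integer matrices of determinant one. -/
abbrev SL3 := Matrix.SpecialLinearGroup (Fin 3) ℤ

/-- The stabilizer in `SL(3, ℤ)` of an integer matrix `B` under the congruence action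
`A · g = gᵀ A g`. -/
def congrStab (B : Matrix (Fin 3) (Fin 3) ℤ) : Subgroup SL3 where
  carrier := {g | (g : Matrix (Fin 3) (Fin 3) ℤ)ᵀ * B * (g : Matrix (Fin 3) (Fin 3) ℤ) = B}
  one_mem' := by simp
  mul_mem' := by
    intro a b ha hb
    simp only [Set.mem_setOf_eq] at *
    calc ((a * b : SL3) : Matrix (Fin 3) (Fin 3) ℤ)ᵀ * B * ((a * b : SL3) : Matrix (Fin 3) (Fin 3) ℤ)
        = (b : Matrix (Fin 3) (Fin 3) ℤ)ᵀ * ((a : Matrix (Fin 3) (Fin 3) ℤ)ᵀ * B * a) * b := by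
          simp [Matrix.transpose_mul, Matrix.mul_assoc]
      _ = B := by rw [ha, hb]
  inv_mem' := by
    intro g hg
    simp only [Set.mem_setOf_eq] at *
    have hc : (g : Matrix (Fin 3) (Fin 3) ℤ) * ((g⁻¹ : SL3) : Matrix (Fin 3) (Fin 3) ℤ) = 1 := by
      rw [← Matrix.SpecialLinearGroup.coe_mul, mul_inv_cancel, Matrix.SpecialLinearGroup.coe_one]
    calc ((g⁻¹ : SL3) : Matrix (Fin 3) (Fin 3) ℤ)ᵀ * B * ((g⁻¹ : SL3) : Matrix (Fin 3) (Fin 3) ℤ)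
        = ((g⁻¹ : SL3) : Matrix (Fin 3) (Fin 3) ℤ)ᵀ *
            ((g : Matrix (Fin 3) (Fin 3) ℤ)ᵀ * B * g) *
            ((g⁻¹ : SL3) : Matrix (Fin 3) (Fin 3) ℤ) := by rw [hg]
      _ = ((g : Matrix (Fin 3) (Fin 3) ℤ) * ((g⁻¹ : SL3) : Matrix (Fin 3) (Fin 3) ℤ))ᵀ * B *
            ((g : Matrix (Fin 3) (Fin 3) ℤ) * ((g⁻¹ : SL3) : Matrix (Fin 3) (Fin 3) ℤ)) := by
          simp [Matrix.transpose_mul, Matrix.mul_assoc]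
      _ = B := by rw [hc]; simp

/-- The matrix `A(1,1,0)` representing the vertex `M′` of Soulé's fundamental domain. -/
def B₁ : Matrix (Fin 3) (Fin 3) ℤ := !![2, 0, 1; 0, 2, 1; 1, 1, 2]

/-- The matrix `3·A(2/3,2/3,-2/3)` representing the vertex `P` of Soulé's fundamental domain. -/
def B₂ : Matrix (Fin 3) (Fin 3) ℤ := !![6, -2, 2; -2, 6, 2; 2, 2, 6]

lemma colClass (x y z : ℤ) (h1 : 2*(x*x)+2*(y*y)+2*(z*z)+2*(x*z)+2*(y*z) = 2)
    (h2 : 4*(x*y)+2*(x*z)+2*(y*z) = 0) :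
    (x=1∧y=0∧z=0) ∨ (x=-1∧y=0∧z=0) ∨ (x=0∧y=1∧z=0) ∨ (x=0∧y=-1∧z=0) ∨
    (x=0∧y=0∧z=1) ∨ (x=0∧y=0∧z=-1) ∨ (x=1∧y=1∧z=-1) ∨ (x=-1∧y=-1∧z=1) := by
  have key : (2*x+z)*(2*x+z) + (2*y+z)*(2*y+z) + 2*(z*z) = 4 := by linear_combination 2*h1
  have hz1 : -1 ≤ z := by nlinarith [mul_self_nonneg (2*x+z), mul_self_nonneg (2*y+z)]
  have hz2 : z ≤ 1 := by nlinarith [mul_self_nonneg (2*x+z), mul_self_nonneg (2*y+z)]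
  have hx1 : -1 ≤ x := by nlinarith [mul_self_nonneg (2*y+z), mul_self_nonneg z]
  have hx2 : x ≤ 1 := by nlinarith [mul_self_nonneg (2*y+z), mul_self_nonneg z]
  have hy1 : -1 ≤ y := by nlinarith [mul_self_nonneg (2*x+z), mul_self_nonneg z]
  have hy2 : y ≤ 1 := by nlinarith [mul_self_nonneg (2*x+z), mul_self_nonneg z]
  interval_cases x <;> interval_cases y <;> interval_cases z <;> omega

set_option maxHeartbeats 4000000 in
lemma matClass (m : Matrix (Fin 3) (Fin 3) ℤ) (h1 : mᵀ*B₁*m = B₁) (h2 : mᵀ*B₂*m = B₂)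
    (hd : m.det = 1) :
    m = !![-1,0,0;-1,0,-1;1,-1,0] ∨ m = !![-1,0,-1;0,-1,-1;0,0,1] ∨
    m = !![0,-1,0;-1,0,0;0,0,-1] ∨ m = !![0,-1,-1;0,-1,0;-1,1,0] ∨
    m = !![0,1,0;0,1,1;1,-1,0] ∨ m = !![0,1,1;1,0,1;0,0,-1] ∨
    m = !![1,0,0;0,1,0;0,0,1] ∨ m = !![1,0,1;1,0,0;-1,1,0] := by
  have e := fun i j => congrFun (congrFun h1 i) j
  have f := fun i j => congrFun (congrFun h2 i) j
  have e00 := e 0 0; have e11 := e 1 1; have e22 := e 2 2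
  have f00 := f 0 0; have f11 := f 1 1; have f22 := f 2 2
  have cr01 := e 0 1; have cr02 := e 0 2; have cr12 := e 1 2
  simp [Matrix.mul_apply, Matrix.transpose_apply, Fin.sum_univ_three, B₁, B₂] at e00 e11 e22 f00 f11 f22 cr01 cr02 cr12
  rw [Matrix.det_fin_three] at hd
  have c0 := colClass (m 0 0) (m 1 0) (m 2 0) (by linear_combination e00) (by linear_combination 3*e00 - f00)
  have c1 := colClass (m 0 1) (m 1 1) (m 2 1) (by linear_combination e11) (by linear_combination 3*e11 - f11)
  have c2 := colClass (m 0 2) (m 1 2) (m 2 2) (by linear_combination e22) (by linear_combination 3*e22 - f22)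
  rw [Matrix.eta_fin_three m]
  obtain (⟨a1,a2,a3⟩|⟨a1,a2,a3⟩|⟨a1,a2,a3⟩|⟨a1,a2,a3⟩|⟨a1,a2,a3⟩|⟨a1,a2,a3⟩|⟨a1,a2,a3⟩|⟨a1,a2,a3⟩) := c0 <;>
  obtain (⟨b1,b2,b3⟩|⟨b1,b2,b3⟩|⟨b1,b2,b3⟩|⟨b1,b2,b3⟩|⟨b1,b2,b3⟩|⟨b1,b2,b3⟩|⟨b1,b2,b3⟩|⟨b1,b2,b3⟩) := c1 <;>
  obtain (⟨d1,d2,d3⟩|⟨d1,d2,d3⟩|⟨d1,d2,d3⟩|⟨d1,d2,d3⟩|⟨d1,d2,d3⟩|⟨d1,d2,d3⟩|⟨d1,d2,d3⟩|⟨d1,d2,d3⟩) := c2 <;>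
  simp only [a1,a2,a3,b1,b2,b3,d1,d2,d3] at cr01 cr02 cr12 hd ⊢ <;>
  first | omega | decide

def Rm : SL3 := ⟨!![0,1,0;0,1,1;1,-1,0], by rw [Matrix.det_fin_three]; decide⟩
def Sm : SL3 := ⟨!![0,-1,0;-1,0,0;0,0,-1], by rw [Matrix.det_fin_three]; decide⟩

lemma hR4 : Rm ^ 4 = 1 := by
  apply Subtype.ext; rw [Matrix.SpecialLinearGroup.coe_pow]; decide
lemma hS2 : Sm * Sm = 1 := by
  apply Subtype.ext; rw [Matrix.SpecialLinearGroup.coe_mul]; decide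
lemma hRS : Rm * Sm = Sm * Rm ^ 3 := by
  apply Subtype.ext
  simp only [Matrix.SpecialLinearGroup.coe_mul, Matrix.SpecialLinearGroup.coe_pow]
  decide

lemma hcomm : ∀ n : ℕ, Rm ^ n * Sm = Sm * Rm ^ (3 * n) := by
  intro n
  induction n with
  | zero => simp
  | succ k ih =>
    rw [pow_succ, mul_assoc, hRS, ← mul_assoc, ih, mul_assoc, ← pow_add]
    ring_nf

lemma hmod : ∀ n : ℕ, Rm ^ (n % 4) = Rm ^ n := by
  intro n
  conv_rhs => rw [← Nat.div_add_mod n 4]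
  rw [pow_add, pow_mul, hR4, one_pow, one_mul]

lemma hv (a : ZMod 4) : ((a.val : ℕ) : ZMod 4) = a := by
  rw [ZMod.natCast_val, ZMod.cast_id]

lemma hpow (a : ZMod 4) (n : ℕ) (h : (n : ZMod 4) = a) : Rm ^ n = Rm ^ a.val := by
  rw [← hmod n, ← hmod a.val]
  congr 1
  exact (ZMod.natCast_eq_natCast_iff n a.val 4).mp (by rw [h, hv])

def f : DihedralGroup 4 → SL3
  | .r i => Rm ^ i.val
  | .sr i => Sm * Rm ^ i.val

lemma f_mul (a b : DihedralGroup 4) : f (a * b) = f a * f b := by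
  have h3 : (3 : ZMod 4) = -1 := rfl
  rcases a with i | i <;> rcases b with j | j
  · show f (.r (i+j)) = Rm ^ i.val * Rm ^ j.val
    rw [← pow_add]
    exact (hpow (i+j) _ (by push_cast [hv]; ring)).symm
  · show f (.sr (j-i)) = Rm ^ i.val * (Sm * Rm ^ j.val)
    show Sm * Rm ^ (j-i).val = _
    rw [← mul_assoc, hcomm, mul_assoc, ← pow_add]
    congr 1
    exact (hpow (j-i) _ (by push_cast [hv, h3]; ring)).symm
  · show f (.sr (i+j)) = Sm * Rm ^ i.val * Rm ^ j.val
    show Sm * Rm ^ (i+j).val = _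
    rw [mul_assoc, ← pow_add]
    congr 1
    exact (hpow (i+j) _ (by push_cast [hv]; ring)).symm
  · show f (.r (j-i)) = Sm * Rm ^ i.val * (Sm * Rm ^ j.val)
    show Rm ^ (j-i).val = _
    rw [mul_assoc, ← mul_assoc (Rm ^ i.val), hcomm, ← mul_assoc, ← mul_assoc, hS2, one_mul,
      ← pow_add]
    exact (hpow (j-i) _ (by push_cast [hv, h3]; ring)).symm

def φ : DihedralGroup 4 →* SL3 := MonoidHom.mk' f f_mul

lemma φ_inj : Function.Injective φ := by
  rw [injective_iff_map_eq_one]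
  intro a h
  rcases a with i | i
  · have hi : i.val = 0 ∨ i.val = 1 ∨ i.val = 2 ∨ i.val = 3 := by
      have := ZMod.val_lt i; omega
    have h' : Rm ^ i.val = 1 := h
    rcases hi with hi | hi | hi | hi <;> rw [hi] at h'
    · have : i = 0 := by rwa [ZMod.val_eq_zero] at hi
      rw [this]; rfl
    all_goals exact absurd (congrArg Subtype.val h') (by rw [Matrix.SpecialLinearGroup.coe_pow]; decide)
  · have hi : i.val = 0 ∨ i.val = 1 ∨ i.val = 2 ∨ i.val = 3 := by
      have := ZMod.val_lt i; omega
    have h' : Sm * Rm ^ i.val = 1 := h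
    rcases hi with hi | hi | hi | hi <;> rw [hi] at h' <;>
      exact absurd (congrArg Subtype.val h')
        (by rw [Matrix.SpecialLinearGroup.coe_mul, Matrix.SpecialLinearGroup.coe_pow]; decide)

lemma hRmem : Rm ∈ congrStab B₁ ⊓ congrStab B₂ :=
  ⟨(by decide : (Rm : Matrix (Fin 3) (Fin 3) ℤ)ᵀ * B₁ * Rm = B₁),
   (by decide : (Rm : Matrix (Fin 3) (Fin 3) ℤ)ᵀ * B₂ * Rm = B₂)⟩

lemma hSmem : Sm ∈ congrStab B₁ ⊓ congrStab B₂ :=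
  ⟨(by decide : (Sm : Matrix (Fin 3) (Fin 3) ℤ)ᵀ * B₁ * Sm = B₁),
   (by decide : (Sm : Matrix (Fin 3) (Fin 3) ℤ)ᵀ * B₂ * Sm = B₂)⟩

lemma hfmem (x : DihedralGroup 4) : φ x ∈ congrStab B₁ ⊓ congrStab B₂ := by
  rcases x with i | i
  · exact pow_mem hRmem i.val
  · exact mul_mem hSmem (pow_mem hRmem i.val)

def ψ : DihedralGroup 4 →* ↥(congrStab B₁ ⊓ congrStab B₂) :=
  φ.codRestrict _ hfmem

lemma ψ_surj : Function.Surjective ψ := by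
  rintro ⟨g, hg⟩
  have hg1 : (g : Matrix (Fin 3) (Fin 3) ℤ)ᵀ * B₁ * g = B₁ := hg.1
  have hg2 : (g : Matrix (Fin 3) (Fin 3) ℤ)ᵀ * B₂ * g = B₂ := hg.2
  have mc := matClass g.1 hg1 hg2 g.2
  rcases mc with h | h | h | h | h | h | h | h
  · exact ⟨.sr 3, Subtype.ext (Subtype.ext (by
      rw [h]; show (Sm * Rm ^ (3 : ZMod 4).val).1 = _
      rw [Matrix.SpecialLinearGroup.coe_mul, Matrix.SpecialLinearGroup.coe_pow]; decide))⟩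
  · exact ⟨.sr 2, Subtype.ext (Subtype.ext (by
      rw [h]; show (Sm * Rm ^ (2 : ZMod 4).val).1 = _
      rw [Matrix.SpecialLinearGroup.coe_mul, Matrix.SpecialLinearGroup.coe_pow]; decide))⟩
  · exact ⟨.sr 0, Subtype.ext (Subtype.ext (by
      rw [h]; show (Sm * Rm ^ (0 : ZMod 4).val).1 = _
      rw [Matrix.SpecialLinearGroup.coe_mul, Matrix.SpecialLinearGroup.coe_pow]; decide))⟩
  · exact ⟨.sr 1, Subtype.ext (Subtype.ext (by
      rw [h]; show (Sm * Rm ^ (1 : ZMod 4).val).1 = _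
      rw [Matrix.SpecialLinearGroup.coe_mul, Matrix.SpecialLinearGroup.coe_pow]; decide))⟩
  · exact ⟨.r 1, Subtype.ext (Subtype.ext (by
      rw [h]; show (Rm ^ (1 : ZMod 4).val).1 = _
      rw [Matrix.SpecialLinearGroup.coe_pow]; decide))⟩
  · exact ⟨.r 2, Subtype.ext (Subtype.ext (by
      rw [h]; show (Rm ^ (2 : ZMod 4).val).1 = _
      rw [Matrix.SpecialLinearGroup.coe_pow]; decide))⟩
  · exact ⟨.r 0, Subtype.ext (Subtype.ext (by
      rw [h]; show (Rm ^ (0 : ZMod 4).val).1 = _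
      rw [Matrix.SpecialLinearGroup.coe_pow]; decide))⟩
  · exact ⟨.r 3, Subtype.ext (Subtype.ext (by
      rw [h]; show (Rm ^ (3 : ZMod 4).val).1 = _
      rw [Matrix.SpecialLinearGroup.coe_pow]; decide))⟩

lemma ψ_inj : Function.Injective ψ := fun a b h =>
  φ_inj (congrArg Subtype.val h)

noncomputable def theIso : DihedralGroup 4 ≃* ↥(congrStab B₁ ⊓ congrStab B₂) :=
  MulEquiv.ofBijective ψ ⟨ψ_inj, ψ_surj⟩

/-- The subgroup `{g ∈ SL(3, ℤ) : gᵀ B₁ g = B₁ and gᵀ B₂ g = B₂}` (the stabilizer of the edge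
`M′P`) is isomorphic to the dihedral group `D₄` of order 8. -/
theorem stabilizer_of_edge_M'P :
    Nonempty (↥(congrStab B₁ ⊓ congrStab B₂) ≃* DihedralGroup 4) ∧
    Nat.card (congrStab B₁ ⊓ congrStab B₂ : Subgroup SL3) = 8 := by
  refine ⟨⟨theIso.symm⟩, ?_⟩
  rw [← Nat.card_congr theIso.toEquiv, DihedralGroup.nat_card]
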